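/- arXiv:1311.4663 — 2 statements merged into one kernel-verified Lean document; each statement's English description precedes it below -/
import Mathlib

section
/- With s = 1: m(d_{1,0}) − m(d_{0,1}) = 11576781275735. -/
/-- Binomial coefficient `C(m, N)` for an integer `m`, with the convention
`C(m, N) = 0` whenever `m < N`. -/
def intChoose (m : ℤ) (N : ℕ) : ℤ :=
  if m < (N : ℤ) then 0 else (m.toNat.choose N : ℤ)

/-- The dimension `m(e)` of the component of the moduli space corresponding to a
complete intersection of multidegree `e = (e_1, …, e_r)` in `ℂP^N`, `N = r + 5`:
`m(e) = 1 - (N+1)^2 + Σ_i C(N+e_i, N)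
      + Σ_i Σ_{j=1}^r (-1)^j Σ_{1 ≤ k_1 < ⋯ < k_j ≤ r} C(N+e_i-e_{k_1}-⋯-e_{k_j}, N)`. -/
def mdim (e : List ℕ) : ℤ :=
  let r := e.length
  let N := r + 5
  1 - ((N : ℤ) + 1) ^ 2
    + ∑ i ∈ Finset.range r, intChoose ((N : ℤ) + (e.getD i 0 : ℤ)) N
    + ∑ i ∈ Finset.range r, ∑ j ∈ Finset.Icc 1 r, (-1 : ℤ) ^ j *
        ∑ S ∈ (Finset.range r).powersetCard j,
          intChoose ((N : ℤ) + (e.getD i 0 : ℤ) - ∑ k ∈ S, (e.getD k 0 : ℤ)) N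

def dA : List ℕ := [88, 77, 72, 54, 48, 31, 29]
def dB : List ℕ := [87, 81, 64, 62, 44, 33, 28]

/-- The composed multidegree `d_{λ,μ}`: `λ` copies of `d` followed by `μ` copies of `d′`. -/
def dcomp (lam mu : ℕ) : List ℕ :=
  (List.replicate lam dA).flatten ++ (List.replicate mu dB).flatten

theorem dcomp_one_zero : dcomp 1 0 = dA := rfl

theorem dcomp_zero_one : dcomp 0 1 = dB := rfl

theorem mdim_dA : mdim dA = 1382270197857128 := by decide

theorem mdim_dB : mdim dB = 1370693416581393 := by decide

theorem stmt12 : mdim (dcomp 1 0) - mdim (dcomp 0 1) = 11576781275735 := by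
  rw [dcomp_one_zero, dcomp_zero_one, mdim_dA, mdim_dB]
  norm_num
end

section
/- Let s ≥ 1, 0 ≤ λ ≤ s, N = 7s + 5, and write the entries of d_{λ,s−λ} as d_1, …, d_{7s}. Then Σ over all triples 1 ≤ k_1 < k_2 < k_3 ≤ 7s of C(N + 88 − d_{k_1} − d_{k_2} − d_{k_3}, N) equals λ^2(s−λ) + [λ·C(s−λ,2) + (1/6)(λ−2)(λ−1)λ]·C(N+1, N) + (λ(λ−1)(s−λ)/2)·C(N+2, N) + λ·C(s−λ,2)·C(N+3, N) + (1/6)(s−λ−2)(s−λ−1)(s−λ)·C(N+4, N). -/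
/-!
The sum only depends on the multiset of entries of `d_{λ,μ}`, and
`C(N + 88 - x, N)` vanishes once the degree sum `x` exceeds `88`. All entries are at least `28`,
so a triple containing an entry `≥ 33` has degree sum `≥ 89` and contributes nothing. The
remaining entries are `μ` copies of `28` and `λ` copies each of `29` and `31`; splitting
`powersetCard 3` over this sum of replicates leaves ten types of triples, of which exactly those
with degree sums `84, …, 88` survive.
-/

open Finset

theorem Finset.sum_powersetCard_comp_sum {ι M β : Type*} [AddCommMonoid M] [AddCommMonoid β]
    (s : Finset ι) (k : ℕ) (e : ι → M) (F : M → β) :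
    ∑ S ∈ s.powersetCard k, F (∑ i ∈ S, e i)
      = ((Multiset.powersetCard k (s.val.map e)).map fun t => F t.sum).sum := by
  rw [Finset.sum_eq_multiset_sum, Multiset.powersetCard_map, Multiset.map_map]
  simp only [Finset.powersetCard, Multiset.map_pmap, Multiset.pmap_eq_map, Function.comp_def,
    Finset.sum_eq_multiset_sum]

theorem List.map_getD_range {α : Type*} (l : List α) (d : α) :
    (Multiset.range l.length).map (l.getD · d) = l := by
  rw [Multiset.range, Multiset.map_coe]
  congr 1
  exact List.ext_getElem (by simp) fun i _ hi => by simp [hi]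

theorem sum_powersetCard_range_getD {β : Type*} [AddCommMonoid β] {l : List ℕ} {n : ℕ}
    (hl : l.length = n) (k : ℕ) (F : ℕ → β) :
    ∑ S ∈ (range n).powersetCard k, F (∑ i ∈ S, l.getD i 0)
      = ((Multiset.powersetCard k l).map fun t => F t.sum).sum := by
  rw [Finset.sum_powersetCard_comp_sum, Finset.range_val, ← hl, List.map_getD_range]

theorem Multiset.powersetCard_replicate {α : Type*} (k n : ℕ) (a : α) :
    powersetCard k (replicate n a) = replicate (n.choose k) (replicate k a) := by
  induction n generalizing k with
  | zero => cases k <;> simp [powersetCard_zero_right]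
  | succ n ih =>
    cases k with
    | zero => simp
    | succ k =>
      rw [replicate_succ, powersetCard_cons, ih, ih, map_replicate, ← replicate_succ,
        Nat.choose_succ_succ', replicate_add (n.choose k), add_comm]

theorem Multiset.sum_powersetCard_add {α β : Type*} [AddCommMonoid β] (s t : Multiset α) (k : ℕ)
    (f : Multiset α → β) :
    ((powersetCard k (s + t)).map f).sum
      = ∑ p ∈ Finset.HasAntidiagonal.antidiagonal k,
          ((powersetCard p.1 s).map fun u => ((powersetCard p.2 t).map fun v => f (u + v)).sum).sum := by
  induction s using Multiset.induction_on generalizing k f with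
  | empty =>
    cases k with
    | zero => simp
    | succ k => simp [Finset.Nat.sum_antidiagonal_succ, powersetCard_zero_right]
  | cons a s ih =>
    cases k with
    | zero => simp
    | succ k =>
      rw [cons_add, powersetCard_cons, map_add, sum_add, map_map, ih, ih,
        Finset.Nat.sum_antidiagonal_succ, Finset.Nat.sum_antidiagonal_succ]
      simp only [powersetCard_cons, powersetCard_zero_left, map_add, sum_add, map_map,
        Finset.sum_add_distrib, Function.comp_def, cons_add]
      abel

theorem cast_choose_three (n : ℕ) : (n.choose 3 : ℚ) = n * (n - 1) * (n - 2) / 6 := by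
  simp [Nat.cast_choose_eq_descPochhammer_div, descPochhammer_succ_eval, Nat.factorial]

theorem coe_flatten_replicate {α : Type*} (n : ℕ) (l : List α) :
    ((List.replicate n l).flatten : Multiset α) = n • (l : Multiset α) := by
  induction n with
  | zero => simp
  | succ n ih => rw [List.replicate_succ, List.flatten_cons, ← Multiset.coe_add, ih, succ_nsmul']

theorem length_dcomp (lam mu : ℕ) : (dcomp lam mu).length = 7 * (lam + mu) := by
  simp [dcomp, dA, dB]
  ring

theorem coe_dcomp (lam mu : ℕ) :
    (dcomp lam mu : Multiset ℕ)
      = (Multiset.replicate mu 28 + (Multiset.replicate lam 29 + Multiset.replicate lam 31))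
        + (lam • {88, 77, 72, 54, 48} + mu • {87, 81, 64, 62, 44, 33}) := by
  rw [dcomp, ← Multiset.coe_add, coe_flatten_replicate, coe_flatten_replicate]
  simp only [dA, dB, ← Multiset.cons_coe, ← Multiset.singleton_add, Multiset.coe_nil, add_zero,
    nsmul_add, ← Multiset.nsmul_singleton, Multiset.insert_eq_cons]
  abel

def shiftedChoose (N x : ℕ) : ℤ := intChoose ((N : ℤ) + 88 - x) N

theorem shiftedChoose_eq_zero {N x : ℕ} (hx : 89 ≤ x) : shiftedChoose N x = 0 := by
  rw [shiftedChoose, intChoose, if_pos (by omega)]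

theorem shiftedChoose_88 (N : ℕ) : shiftedChoose N 88 = 1 := by
  rw [shiftedChoose, intChoose, if_neg (by omega),
    show ((N : ℤ) + 88 - (88 : ℕ)).toNat = N by omega, Nat.choose_self, Nat.cast_one]

theorem sum_shiftedChoose_powersetCard_three_add_of_le (N : ℕ) {s t : Multiset ℕ}
    (hs : ∀ a ∈ s, 28 ≤ a) (ht : ∀ b ∈ t, 33 ≤ b) :
    ((Multiset.powersetCard 3 (s + t)).map fun u => shiftedChoose N u.sum).sum
      = ((Multiset.powersetCard 3 s).map fun u => shiftedChoose N u.sum).sum := by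
  rw [Multiset.sum_powersetCard_add, Finset.sum_eq_single (3, 0)]
  · simp
  · rintro ⟨i, j⟩ hij hne
    rw [Finset.HasAntidiagonal.mem_antidiagonal] at hij
    have hj : j ≠ 0 := by
      rintro rfl
      simp_all
    refine Multiset.sum_eq_zero fun x hx => ?_
    obtain ⟨u, hu, rfl⟩ := Multiset.mem_map.1 hx
    refine Multiset.sum_eq_zero fun y hy => ?_
    obtain ⟨v, hv, rfl⟩ := Multiset.mem_map.1 hy
    rw [Multiset.mem_powersetCard] at hu hv
    obtain ⟨b, hb⟩ : ∃ b, b ∈ v := Multiset.card_pos_iff_exists_mem.1 (by omega)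
    obtain ⟨v', rfl⟩ := Multiset.exists_cons_of_mem hb
    have hcard : (u + v').card = 2 := by
      rw [Multiset.card_cons] at hv
      rw [Multiset.card_add]
      omega
    have hrest : (u + v').card • 28 ≤ (u + v').sum := Multiset.card_nsmul_le_sum fun a ha => by
      rcases Multiset.mem_add.1 ha with ha | ha
      · exact hs a (Multiset.mem_of_le hu.1 ha)
      · exact (ht a (Multiset.mem_of_le hv.1 (Multiset.mem_cons_of_mem ha))).trans' (by norm_num)
    have hb33 := ht b (Multiset.mem_of_le hv.1 (Multiset.mem_cons_self b v'))
    rw [hcard, smul_eq_mul] at hrest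
    apply shiftedChoose_eq_zero
    rw [Multiset.add_cons, Multiset.sum_cons]
    omega
  · simp

theorem sum_shiftedChoose_powersetCard_three_replicate (N lam mu : ℕ) :
    ((Multiset.powersetCard 3
        (Multiset.replicate mu 28 + (Multiset.replicate lam 29 + Multiset.replicate lam 31))).map
        fun u => shiftedChoose N u.sum).sum
      = lam ^ 2 * mu + (lam * mu.choose 2 + lam.choose 3) * intChoose (N + 1) N
        + lam.choose 2 * mu * intChoose (N + 2) N + lam * mu.choose 2 * intChoose (N + 3) N
        + mu.choose 3 * intChoose (N + 4) N := by
  simp only [Multiset.sum_powersetCard_add, Multiset.powersetCard_replicate, Multiset.map_replicate,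
    Multiset.sum_replicate, Finset.Nat.sum_antidiagonal_succ, HasAntidiagonal.antidiagonal_zero,
    sum_singleton, Multiset.sum_add, Nat.choose_zero_right, Nat.choose_one_right, Nat.reduceAdd,
    smul_eq_mul, Int.nsmul_eq_mul, Nat.cast_one, one_mul, zero_mul, zero_add, add_zero]
  rw [shiftedChoose_eq_zero (x := 89) (by norm_num), shiftedChoose_eq_zero (x := 90) (by norm_num),
    shiftedChoose_eq_zero (x := 91) (by norm_num), shiftedChoose_eq_zero (x := 93) (by norm_num),
    shiftedChoose_88]
  simp only [shiftedChoose]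
  ring_nf

theorem stmt17_general (s lam : ℕ) (hlam : lam ≤ s) :
    ((∑ S ∈ (Finset.range (7 * s)).powersetCard 3,
        intChoose (((7 * s + 5 : ℕ) : ℤ) + 88
          - ∑ k ∈ S, ((dcomp lam (s - lam)).getD k 0 : ℤ)) (7 * s + 5) : ℤ) : ℚ)
      = (lam : ℚ) ^ 2 * ((s : ℚ) - lam)
        + ((lam : ℚ) * (((s : ℚ) - lam) * ((s : ℚ) - lam - 1) / 2)
            + (1 / 6) * ((lam : ℚ) - 2) * ((lam : ℚ) - 1) * (lam : ℚ))
          * (intChoose (((7 * s + 5 : ℕ) : ℤ) + 1) (7 * s + 5) : ℚ)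
        + ((lam : ℚ) * ((lam : ℚ) - 1) * ((s : ℚ) - lam) / 2)
          * (intChoose (((7 * s + 5 : ℕ) : ℤ) + 2) (7 * s + 5) : ℚ)
        + (lam : ℚ) * (((s : ℚ) - lam) * ((s : ℚ) - lam - 1) / 2)
          * (intChoose (((7 * s + 5 : ℕ) : ℤ) + 3) (7 * s + 5) : ℚ)
        + (1 / 6) * ((s : ℚ) - lam - 2) * ((s : ℚ) - lam - 1) * ((s : ℚ) - lam)
          * (intChoose (((7 * s + 5 : ℕ) : ℤ) + 4) (7 * s + 5) : ℚ) := by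
  obtain ⟨mu, rfl⟩ : ∃ mu, s = lam + mu := ⟨s - lam, by omega⟩
  have hsmall : ∀ a ∈ Multiset.replicate mu 28 + (Multiset.replicate lam 29
      + Multiset.replicate lam 31), 28 ≤ a := by
    simp only [Multiset.mem_add, Multiset.mem_replicate]
    omega
  have hlarge : ∀ b ∈ lam • ({88, 77, 72, 54, 48} : Multiset ℕ)
      + mu • ({87, 81, 64, 62, 44, 33} : Multiset ℕ), 33 ≤ b := by
    simp only [Multiset.mem_add, Multiset.mem_nsmul, Multiset.insert_eq_cons, Multiset.mem_cons,
      Multiset.mem_singleton]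
    omega
  have hmultiset : (∑ S ∈ (range (7 * (lam + mu))).powersetCard 3,
      intChoose (((7 * (lam + mu) + 5 : ℕ) : ℤ) + 88
        - ∑ k ∈ S, ((dcomp lam mu).getD k 0 : ℤ)) (7 * (lam + mu) + 5) : ℤ)
      = ((Multiset.powersetCard 3 (dcomp lam mu : Multiset ℕ)).map
          fun u => shiftedChoose (7 * (lam + mu) + 5) u.sum).sum := by
    rw [← sum_powersetCard_range_getD (length_dcomp lam mu)]
    simp [shiftedChoose]
  rw [Nat.add_sub_cancel_left, hmultiset, coe_dcomp,
    sum_shiftedChoose_powersetCard_three_add_of_le _ hsmall hlarge,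
    sum_shiftedChoose_powersetCard_three_replicate]
  push_cast [Nat.cast_choose_two, cast_choose_three]
  ring

theorem stmt17 (s lam : ℕ) (hs : 1 ≤ s) (hlam : lam ≤ s) :
    ((∑ S ∈ (Finset.range (7 * s)).powersetCard 3,
        intChoose (((7 * s + 5 : ℕ) : ℤ) + 88
          - ∑ k ∈ S, ((dcomp lam (s - lam)).getD k 0 : ℤ)) (7 * s + 5) : ℤ) : ℚ)
      = (lam : ℚ) ^ 2 * ((s : ℚ) - lam)
        + ((lam : ℚ) * (((s : ℚ) - lam) * ((s : ℚ) - lam - 1) / 2)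
            + (1 / 6) * ((lam : ℚ) - 2) * ((lam : ℚ) - 1) * (lam : ℚ))
          * (intChoose (((7 * s + 5 : ℕ) : ℤ) + 1) (7 * s + 5) : ℚ)
        + ((lam : ℚ) * ((lam : ℚ) - 1) * ((s : ℚ) - lam) / 2)
          * (intChoose (((7 * s + 5 : ℕ) : ℤ) + 2) (7 * s + 5) : ℚ)
        + (lam : ℚ) * (((s : ℚ) - lam) * ((s : ℚ) - lam - 1) / 2)
          * (intChoose (((7 * s + 5 : ℕ) : ℤ) + 3) (7 * s + 5) : ℚ)
        + (1 / 6) * ((s : ℚ) - lam - 2) * ((s : ℚ) - lam - 1) * ((s : ℚ) - lam)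
          * (intChoose (((7 * s + 5 : ℕ) : ℤ) + 4) (7 * s + 5) : ℚ) :=
  stmt17_general s lam hlam
end
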